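/- For Δ_ε = Δ + x_1^{p-1}···x_{n-1}^{p-1}Σ_{i=1}^{n-1}(−1)^{n−i}ε_iD_i ∈ W_{n-1}, the powers Δ_ε^{p^i} for i = 0,...,n−2 satisfy Δ_ε^{p^i} ≡ (−1)^iD_{i+1} modulo m·W_{n-1}, and thus form a basis of W_{n-1} as a free B_{n-1}-module. -/

import Mathlib

/-!
Write `x^(N)` for the monomial whose exponents are the base-`p` digits of `N < p ^ m`, so that
`x^(0) = 1`, `x^(p ^ j) = x_j` and `x^(p ^ m - 1) = ∏ x_j ^ (p - 1)`. The staircase derivation `Δ`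
lowers the index by one, `Δ x^(N) = ℓ(N) x^(N - 1)` with `ℓ(N)` the lowest nonzero digit of `N`,
and the `ε`-term of `Δ_ε` only produces multiples of the top monomial. Hence, modulo the span of
the monomials of index `≥ p ^ m - t`, `Δ_ε^t x^(N) ≡ ℓ(N) ℓ(N - 1) ⋯ ℓ(N - t + 1) x^(N - t)`.
For `N = p ^ j` and `t = p ^ i` this gives `Δ_ε^(p^i) x_j ∈ 𝔪` if `i ≠ j`, and
`Δ_ε^(p^i) x_i ≡ ∏_{u ≤ p^i} ℓ(u) = (-1)^i` by Wilson's theorem. So the coordinate matrix of the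
`Δ_ε^(p^i)` in the basis `D_j` is `diag((-1)^i)` modulo the nilpotent ideal `𝔪 = (x_1, …, x_m)`,
hence invertible.
-/

open Finset

lemma Derivation.sum_apply {R A : Type*} [CommRing R] [CommRing A] [Algebra R A] {ι : Type*}
    (s : Finset ι) (f : ι → Derivation R A A) (y : A) : (∑ i ∈ s, f i) y = ∑ i ∈ s, f i y := by
  have := congrFun (map_sum Derivation.coeFnAddMonoidHom f s) y
  rwa [Finset.sum_apply] at this

lemma Module.Basis.repr_derivation_apply {R A ι : Type*} [CommRing R] [CommRing A] [Algebra R A]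
    [Fintype ι] [DecidableEq ι] (b : Module.Basis ι A (Derivation R A A)) {x : ι → A}
    (hb : ∀ i j, b i (x j) = if i = j then 1 else 0) (δ : Derivation R A A) (j : ι) :
    b.repr δ j = δ (x j) := by
  conv_rhs => rw [← b.sum_repr δ]
  simp only [Derivation.sum_apply, Derivation.smul_apply, hb, smul_eq_mul, mul_ite, mul_one,
    mul_zero, sum_ite_eq']
  simp

lemma mul_mem_span_singleton_of_adjoin_eq_top {R A : Type*} [CommRing R] [CommRing A] [Algebra R A]
    {S : Set A} (hS : Algebra.adjoin R S = ⊤) {a : A} (ha : ∀ s ∈ S, a * s = 0) (y : A) :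
    a * y ∈ R ∙ a := by
  induction (hS ▸ Algebra.mem_top : y ∈ Algebra.adjoin R S) using Algebra.adjoin_induction with
  | mem s hs => rw [ha s hs]; exact zero_mem _
  | algebraMap r =>
    rw [mul_comm, ← Algebra.smul_def]
    exact Submodule.smul_mem _ _ (Submodule.mem_span_singleton_self a)
  | add y z _ _ hy hz => rw [mul_add]; exact add_mem hy hz
  | mul y z _ _ hy hz =>
    obtain ⟨c, hc⟩ := Submodule.mem_span_singleton.mp hy
    rw [← mul_assoc, ← hc, smul_mul_assoc]
    exact Submodule.smul_mem _ _ hz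

lemma MvPolynomial.adjoin_range_algEquiv_quotient_X {R B σ : Type*} [CommRing R] [CommRing B]
    [Algebra R B] (I : Ideal (MvPolynomial σ R)) (e : (MvPolynomial σ R ⧸ I) ≃ₐ[R] B) :
    Algebra.adjoin R (Set.range fun j => e (Ideal.Quotient.mk I (X j))) = ⊤ := by
  have hrange : (Set.range fun j => e (Ideal.Quotient.mk I (X j))) =
      (e.toAlgHom.comp (Ideal.Quotient.mkₐ R I)) '' Set.range X := by
    rw [← Set.range_comp]; rfl
  rw [hrange, ← AlgHom.map_adjoin, adjoin_range_X, Algebra.map_top, AlgHom.range_eq_top]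
  exact e.surjective.comp Ideal.Quotient.mk_surjective

/-- The determinant of `v` is a unit modulo the nilpotent ideal `I`, hence a unit. -/
theorem Module.Basis.exists_basis_of_repr_sub_smul_mem {R M ι : Type*} [CommRing R]
    [AddCommGroup M] [Module R M] [Fintype ι] [DecidableEq ι] (b : Module.Basis ι R M)
    {I : Ideal R} (hI : IsNilpotent I) (v : ι → M) {d : ι → R} (hd : ∀ i, IsUnit (d i))
    (h : ∀ i j, b.repr (v i - d i • b i) j ∈ I) : ∃ c : Module.Basis ι R M, ∀ i, c i = v i := by
  have hmat : (b.toMatrix v).map (Ideal.Quotient.mk I) =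
      Matrix.diagonal fun i => Ideal.Quotient.mk I (d i) := by
    ext i j
    have hij := h j i
    rw [map_sub, map_smul, Finsupp.sub_apply, Finsupp.smul_apply, b.repr_self,
      Finsupp.single_apply, smul_eq_mul] at hij
    rw [Matrix.map_apply, b.toMatrix_apply, Matrix.diagonal_apply]
    split_ifs with hij' <;> subst_vars
    · simpa using Ideal.Quotient.eq.mpr hij
    · simpa [Ne.symm hij', Ideal.Quotient.eq_zero_iff_mem] using hij
  have hdet : IsUnit (b.det v) := by
    rw [← hI.isUnit_quotient_mk_iff, b.det_apply, RingHom.map_det, RingHom.mapMatrix_apply, hmat,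
      Matrix.det_diagonal]
    exact IsUnit.prod_univ_iff.mpr fun i => (hd i).map _
  obtain ⟨hli, hspan⟩ := (b.is_basis_iff_det).mpr hdet
  exact ⟨Module.Basis.mk hli hspan.ge, Module.Basis.mk_apply hli hspan.ge⟩

namespace JacobsonWitt

def digit (p N j : ℕ) : ℕ := N / p ^ j % p

def lowDigit (p N : ℕ) : ℕ := digit p N (padicValNat p N)

section Digits

variable {p : ℕ}

lemma digit_zero_left (j : ℕ) : digit p 0 j = 0 := by simp [digit]

lemma digit_zero_of_lt {r : ℕ} (hr : r < p) : digit p r 0 = r := by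
  simp [digit, Nat.mod_eq_of_lt hr]

lemma digit_pow_mul_add (hp : 0 < p) {t q r : ℕ} (hr : r < p ^ t) (j : ℕ) :
    digit p (p ^ t * q + r) j = if j < t then digit p r j else digit p q (j - t) := by
  unfold digit
  split_ifs with hj
  · obtain ⟨s, rfl⟩ := Nat.exists_eq_add_of_lt hj
    have : p ^ (j + s + 1) * q + r = r + p ^ j * (p * (p ^ s * q)) := by ring
    rw [this, Nat.add_mul_div_left _ _ (pow_pos hp _), Nat.add_mul_mod_self_left]
  · obtain ⟨s, rfl⟩ := Nat.exists_eq_add_of_le (not_lt.mp hj)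
    rw [pow_add, ← Nat.div_div_eq_div_mul, add_comm, Nat.add_mul_div_left _ _ (pow_pos hp _),
      Nat.div_eq_of_lt hr, zero_add, Nat.add_sub_cancel_left]

lemma digit_pow_mul (hp : 0 < p) (t q j : ℕ) :
    digit p (p ^ t * q) j = if j < t then 0 else digit p q (j - t) := by
  simpa [digit_zero_left] using digit_pow_mul_add hp (pow_pos hp t) (q := q) j

lemma digit_pow (hp : 1 < p) (i j : ℕ) : digit p (p ^ i) j = if j = i then 1 else 0 := by
  have h := digit_pow_mul (p := p) (by omega) i 1 j
  rw [mul_one] at h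
  rw [h]
  rcases lt_trichotomy j i with hji | rfl | hji
  · simp [hji, hji.ne]
  · simp [digit, Nat.mod_eq_of_lt hp]
  · simp [digit, not_lt.mpr hji.le, hji.ne',
      Nat.div_eq_of_lt (Nat.one_lt_pow (Nat.sub_ne_zero_of_lt hji) hp)]

lemma digit_pow_sub_one (hp : 0 < p) {t j : ℕ} (hj : j < t) : digit p (p ^ t - 1) j = p - 1 := by
  induction t with
  | zero => omega
  | succ t ih =>
    have hpt := pow_pos hp t
    have h : p ^ (t + 1) - 1 = p ^ t * (p - 1) + (p ^ t - 1) := by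
      rw [pow_succ, Nat.mul_sub_one]
      have := Nat.le_mul_of_pos_right (p ^ t) hp
      omega
    rw [h, digit_pow_mul_add hp (by omega)]
    split_ifs with hjt
    · exact ih hjt
    · rw [show j - t = 0 by omega, digit_zero_of_lt (by omega)]

lemma digit_sub_one_of_not_dvd (hp : 0 < p) {q : ℕ} (hq : ¬ p ∣ q) (s : ℕ) :
    digit p (q - 1) s = if s = 0 then digit p q 0 - 1 else digit p q s := by
  have hr : 0 < q % p := Nat.pos_of_ne_zero fun h => hq (Nat.dvd_of_mod_eq_zero h)
  have hlt : q % p < p := Nat.mod_lt _ hp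
  have hq' : q = p ^ 1 * (q / p) + q % p := by rw [pow_one, Nat.div_add_mod]
  have hq1 : q - 1 = p ^ 1 * (q / p) + (q % p - 1) := by omega
  have hp1 : p ^ 1 = p := pow_one p
  rw [hq1, digit_pow_mul_add hp (by omega)]
  conv_rhs => rw [hq', digit_pow_mul_add hp (by omega), digit_pow_mul_add hp (by omega)]
  rcases Nat.eq_zero_or_pos s with rfl | hs
  · simp [digit_zero_of_lt hlt, digit_zero_of_lt (show q % p - 1 < p by omega)]
  · simp [hs.ne', Nat.not_lt.mpr hs]

lemma digit_pow_mul_sub_one (hp : 0 < p) {t q : ℕ} (hq : ¬ p ∣ q) (j : ℕ) :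
    digit p (p ^ t * q - 1) j =
      if j < t then p - 1
      else if j = t then digit p (p ^ t * q) j - 1
      else digit p (p ^ t * q) j := by
  have hq0 : 0 < q := Nat.pos_of_ne_zero fun h => hq (h ▸ dvd_zero p)
  have hpt := pow_pos hp t
  have h : p ^ t * q - 1 = p ^ t * (q - 1) + (p ^ t - 1) := by
    rw [Nat.mul_sub_one]
    have := Nat.le_mul_of_pos_right (p ^ t) hq0
    omega
  rw [h, digit_pow_mul_add hp (by omega), digit_pow_mul hp]
  rcases lt_trichotomy j t with hj | rfl | hj
  · simp [hj, digit_pow_sub_one hp hj]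
  · simp [digit_sub_one_of_not_dvd hp hq]
  · simp [hj.ne', not_lt.mpr hj.le, digit_sub_one_of_not_dvd hp hq, Nat.sub_ne_zero_of_lt hj]

lemma lt_of_pow_mul_lt (hp : 1 < p) {t q m : ℕ} (hq : q ≠ 0) (h : p ^ t * q < p ^ m) : t < m :=
  (Nat.pow_lt_pow_iff_right hp).mp ((Nat.le_mul_of_pos_right _ (Nat.pos_of_ne_zero hq)).trans_lt h)

variable [hp : Fact p.Prime]

lemma padicValNat_pow_mul {t q : ℕ} (hq : ¬ p ∣ q) : padicValNat p (p ^ t * q) = t := by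
  have hq0 : q ≠ 0 := fun h => hq (h ▸ dvd_zero p)
  rw [padicValNat.mul (pow_ne_zero _ hp.out.ne_zero) hq0, padicValNat.prime_pow,
    padicValNat.eq_zero_of_not_dvd hq, add_zero]

lemma lowDigit_pow_mul {t q : ℕ} (hq : ¬ p ∣ q) : lowDigit p (p ^ t * q) = q % p := by
  rw [lowDigit, padicValNat_pow_mul hq, digit_pow_mul hp.out.pos]
  simp [digit]

lemma lowDigit_ne_zero {N : ℕ} (hN : N ≠ 0) : lowDigit p N ≠ 0 := by
  obtain ⟨t, q, hq, rfl⟩ := Nat.exists_eq_pow_mul_and_not_dvd hN p hp.out.ne_one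
  rw [lowDigit_pow_mul hq]
  exact fun h => hq (Nat.dvd_of_mod_eq_zero h)

lemma lowDigit_prime_mul {u : ℕ} (hu : u ≠ 0) : lowDigit p (p * u) = lowDigit p u := by
  obtain ⟨t, q, hq, rfl⟩ := Nat.exists_eq_pow_mul_and_not_dvd hu p hp.out.ne_one
  rw [← mul_assoc, ← pow_succ', lowDigit_pow_mul hq, lowDigit_pow_mul hq]

lemma lowDigit_of_not_dvd {u : ℕ} (hu : ¬ p ∣ u) : lowDigit p u = u % p := by
  simpa using lowDigit_pow_mul (t := 0) hu

section Wilson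

variable (k : Type*) [Field k] [CharP k p]

lemma cast_factorial_sub_one : ((p - 1).factorial : k) = -1 := by
  have h := congrArg (ZMod.castHom (dvd_refl p) k) (ZMod.wilsons_lemma (p := p))
  rwa [map_natCast, map_neg, map_one] at h

/-- Each block of `p` consecutive numbers contributes `(p - 1)! = -1`, except for its last
member `p * (M + 1)`, whose lowest digit is that of `M + 1`. -/
lemma prod_range_lowDigit_mul (M : ℕ) :
    ∏ u ∈ range (M * p), (lowDigit p (u + 1) : k) =
      (-1) ^ M * ∏ u ∈ range M, (lowDigit p (u + 1) : k) := by
  induction M with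
  | zero => simp
  | succ M ih =>
    have hp1 : p - 1 + 1 = p := Nat.sub_add_cancel hp.out.one_le
    have hblock : ∀ r ∈ range (p - 1), lowDigit p (M * p + r + 1) = r + 1 := by
      intro r hr
      have hmod : (M * p + r + 1) % p = r + 1 := by
        rw [show M * p + r + 1 = r + 1 + M * p by ring, Nat.add_mul_mod_self_right,
          Nat.mod_eq_of_lt (by simp at hr; omega)]
      rw [lowDigit_of_not_dvd (by rw [Nat.dvd_iff_mod_eq_zero, hmod]; omega), hmod]
    have hlast : lowDigit p (M * p + (p - 1) + 1) = lowDigit p (M + 1) := by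
      rw [add_assoc, hp1, show M * p + p = p * (M + 1) by ring, lowDigit_prime_mul M.succ_ne_zero]
    have hwilson : ∏ r ∈ range (p - 1), ((r + 1 : ℕ) : k) = -1 := by
      rw [← Nat.cast_prod, prod_range_add_one_eq_factorial, cast_factorial_sub_one]
    have hsplit := prod_range_succ (fun r => (lowDigit p (M * p + r + 1) : k)) (p - 1)
    rw [hp1] at hsplit
    rw [add_mul, one_mul, prod_range_add, hsplit, hlast, ih, prod_range_succ,
      prod_congr rfl fun r h => congrArg (Nat.cast : ℕ → k) (hblock r h), hwilson]
    ring

lemma prod_range_lowDigit_pow (i : ℕ) :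
    ∏ u ∈ range (p ^ i), (lowDigit p (p ^ i - u) : k) = (-1) ^ i := by
  rw [← prod_range_reflect]
  rw [prod_congr rfl fun u hu => by rw [show p ^ i - (p ^ i - 1 - u) = u + 1 by simp at hu; omega]]
  induction i with
  | zero =>
    simp [lowDigit_of_not_dvd (Nat.Prime.not_dvd_one hp.out), Nat.mod_eq_of_lt hp.out.one_lt]
  | succ i ih =>
    rw [pow_succ, prod_range_lowDigit_mul, ih, neg_one_pow_char_pow, pow_succ, mul_comm]

end Wilson

end Digits

section Lowering

variable (R : Type*) {M : Type*} [CommRing R] [AddCommGroup M] [Module R M]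

def tailSpan (v : ℕ → M) (L s : ℕ) : Submodule R M := Submodule.span R (v '' Set.Ico s L)

variable {R} {v : ℕ → M} {L : ℕ}

lemma tailSpan_anti {s s' : ℕ} (h : s ≤ s') : tailSpan R v L s' ≤ tailSpan R v L s :=
  Submodule.span_mono (Set.image_mono (Set.Ico_subset_Ico_left h))

lemma apply_mem_tailSpan {s N : ℕ} (hs : s ≤ N) (hN : N < L) : v N ∈ tailSpan R v L s :=
  Submodule.subset_span ⟨N, ⟨hs, hN⟩, rfl⟩

variable {T : Module.End R M} {c : ℕ → R} (hT0 : T (v 0) = 0)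
  (hT : ∀ N, 0 < N → N < L → T (v N) - c N • v (N - 1) ∈ tailSpan R v L (L - 1))
include hT0 hT

lemma apply_mem_tailSpan_sub_one {s : ℕ} {y : M} (hy : y ∈ tailSpan R v L s) :
    T y ∈ tailSpan R v L (s - 1) := by
  suffices tailSpan R v L s ≤ (tailSpan R v L (s - 1)).comap T from this hy
  refine Submodule.span_le.mpr ?_
  rintro _ ⟨N, ⟨hsN, hNL⟩, rfl⟩
  rcases Nat.eq_zero_or_pos N with rfl | hN
  · simp [hT0]
  · rw [SetLike.mem_coe, Submodule.mem_comap, ← sub_add_cancel (T (v N)) (c N • v (N - 1))]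
    exact add_mem (tailSpan_anti (by omega) (hT N hN hNL))
      (Submodule.smul_mem _ _ (apply_mem_tailSpan (by omega) (by omega)))

lemma pow_apply_mem_tailSpan_sub (t : ℕ) {s : ℕ} {y : M} (hy : y ∈ tailSpan R v L s) :
    (T ^ t) y ∈ tailSpan R v L (s - t) := by
  induction t with
  | zero => simpa using hy
  | succ t ih =>
    rw [pow_succ', Module.End.mul_apply, ← Nat.sub_sub]
    exact apply_mem_tailSpan_sub_one hT0 hT ih

lemma pow_apply_sub_prod_mem {t N : ℕ} (htN : t ≤ N) (hN : N < L) :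
    (T ^ t) (v N) - (∏ u ∈ range t, c (N - u)) • v (N - t) ∈ tailSpan R v L (L - t) := by
  induction t with
  | zero => simp
  | succ t ih =>
    have hstep := hT (N - t) (by omega) (by omega)
    rw [Nat.sub_sub] at hstep
    have hdecomp : (T ^ (t + 1)) (v N) - (∏ u ∈ range (t + 1), c (N - u)) • v (N - (t + 1)) =
        T ((T ^ t) (v N) - (∏ u ∈ range t, c (N - u)) • v (N - t)) +
          (∏ u ∈ range t, c (N - u)) • (T (v (N - t)) - c (N - t) • v (N - (t + 1))) := by
      rw [pow_succ', Module.End.mul_apply, prod_range_succ, map_sub, map_smul, smul_sub, mul_smul]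
      abel
    rw [hdecomp]
    refine add_mem ?_ (Submodule.smul_mem _ _ (tailSpan_anti (by omega) hstep))
    simpa [Nat.sub_sub] using apply_mem_tailSpan_sub_one hT0 hT (ih (by omega))

lemma pow_apply_self_sub_mem {a : ℕ} (ha : a < L) :
    (T ^ a) (v a) - (∏ u ∈ range a, c (a - u)) • v 0 ∈ tailSpan R v L 1 := by
  simpa using tailSpan_anti (by omega) (pow_apply_sub_prod_mem hT0 hT le_rfl ha)

lemma pow_apply_mem_tailSpan_one {a b : ℕ} (hab : a ≠ b) (ha : a < L) (hb : b < L) :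
    (T ^ a) (v b) ∈ tailSpan R v L 1 := by
  rcases hab.lt_or_gt with hab | hab
  · rw [← sub_add_cancel ((T ^ a) (v b)) ((∏ u ∈ range a, c (b - u)) • v (b - a))]
    exact add_mem (tailSpan_anti (by omega) (pow_apply_sub_prod_mem hT0 hT hab.le hb))
      (Submodule.smul_mem _ _ (apply_mem_tailSpan (by omega) (by omega)))
  · -- after `b` steps, `v b` is a multiple of `v 0` plus terms of index `≥ L - b`; `T` kills `v 0`
    obtain ⟨d, rfl⟩ := Nat.exists_eq_add_of_lt hab
    have hconst : (T ^ (d + 1)) (v 0) = 0 := by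
      rw [pow_succ, Module.End.mul_apply, hT0, map_zero]
    have h := pow_apply_mem_tailSpan_sub hT0 hT (d + 1) (pow_apply_sub_prod_mem hT0 hT le_rfl hb)
    rw [map_sub, Nat.sub_self, map_smul, hconst, smul_zero, sub_zero, ← Module.End.mul_apply,
      ← pow_add, Nat.sub_sub, show d + 1 + b = b + d + 1 by omega] at h
    exact tailSpan_anti (by omega) h

end Lowering

section Monomials

variable {k B : Type*} [Field k] [CommRing B] [Algebra k B] {m : ℕ} (x : Fin m → B)

def monomial (a : Fin m → ℕ) : B := ∏ j, x j ^ a j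

def digitMonomial (p N : ℕ) : B := monomial x fun j => digit p N j

def delta (p : ℕ) (D : Fin m → Derivation k B B) : Derivation k B B :=
  ∑ i : Fin m, (∏ j ∈ Finset.univ.filter (fun j : Fin m => j < i), x j ^ (p - 1)) • D i

variable {x}

lemma monomial_add (a b : Fin m → ℕ) : monomial x (a + b) = monomial x a * monomial x b := by
  simp [monomial, pow_add, prod_mul_distrib]

lemma monomial_eq_zero {p : ℕ} (hxp : ∀ j, x j ^ p = 0) {a : Fin m → ℕ} {j : Fin m}
    (h : p ≤ a j) : monomial x a = 0 :=
  prod_eq_zero (mem_univ j) (by rw [← Nat.add_sub_cancel' h, pow_add, hxp, zero_mul])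

lemma derivation_monomial {d : Derivation k B B} {i : Fin m}
    (hd : ∀ j, d (x j) = if i = j then 1 else 0) (a : Fin m → ℕ) :
    d (monomial x a) = a i • monomial x (Function.update a i (a i - 1)) := by
  have hrest : ∀ b : Fin m → ℕ, ∏ j ∈ univ.erase i, x j ^ Function.update b i (b i - 1) j =
      ∏ j ∈ univ.erase i, x j ^ b j :=
    fun b => prod_congr rfl fun j hj => by rw [Function.update_of_ne (ne_of_mem_erase hj)]
  have hconst : d (∏ j ∈ univ.erase i, x j ^ a j) = 0 := by
    refine prod_induction _ (fun y => d y = 0) (fun y z hy hz => ?_) d.map_one_eq_zero ?_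
    · rw [Derivation.leibniz, hy, hz, smul_zero, smul_zero, add_zero]
    · intro j hj
      rw [Derivation.leibniz_pow, hd, if_neg (ne_of_mem_erase hj).symm, smul_zero, smul_zero]
  rw [monomial, monomial, ← mul_prod_erase univ _ (mem_univ i),
    ← mul_prod_erase univ _ (mem_univ i),
    hrest, Function.update_self, Derivation.leibniz, hconst, smul_zero, zero_add,
    Derivation.leibniz_pow, hd, if_pos rfl, smul_eq_mul, smul_eq_mul, mul_one, nsmul_eq_mul,
    nsmul_eq_mul]
  ring

variable {p : ℕ} [hp : Fact p.Prime] {D : Fin m → Derivation k B B}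

omit hp in
lemma prod_filter_lt_eq_monomial (i : Fin m) :
    ∏ j ∈ univ.filter (fun j : Fin m => j < i), x j ^ (p - 1) =
      monomial x (fun j => if j < i then p - 1 else 0) := by
  rw [monomial, prod_filter]
  exact prod_congr rfl fun j _ => by split_ifs <;> simp

lemma delta_digitMonomial (hxp : ∀ j, x j ^ p = 0)
    (hD : ∀ i j, D i (x j) = if i = j then 1 else 0) {N : ℕ} (hN0 : N ≠ 0) (hN : N < p ^ m) :
    delta x p D (digitMonomial x p N) = lowDigit p N • digitMonomial x p (N - 1) := by
  obtain ⟨t, q, hq, rfl⟩ := Nat.exists_eq_pow_mul_and_not_dvd hN0 p hp.out.ne_one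
  have hpos : 0 < p := hp.out.pos
  have hq0 : 0 < q % p := Nat.pos_of_ne_zero fun h => hq (Nat.dvd_of_mod_eq_zero h)
  have ht : t < m := lt_of_pow_mul_lt hp.out.one_lt (by rintro rfl; simp at hq0) hN
  have hdigit := digit_pow_mul hpos t q
  have hdigit_t : digit p q 0 = q % p := by simp [digit]
  -- Only the summand `i = t` survives: for `i < t` the exponent of `x_i` is `0`, and for `i > t`
  -- the factor `x_t ^ (p - 1)` of the coefficient times the positive power of `x_t` vanishes.
  rw [delta, Derivation.sum_apply, sum_eq_single ⟨t, ht⟩]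
  · rw [Derivation.smul_apply, digitMonomial, derivation_monomial (hD _), smul_eq_mul,
      prod_filter_lt_eq_monomial, mul_smul_comm, ← monomial_add, lowDigit, padicValNat_pow_mul hq,
      digitMonomial]
    congr 2
    funext j
    simp only [Pi.add_apply, Function.update_apply, digit_pow_mul_sub_one hpos hq, hdigit,
      Fin.lt_def, Fin.ext_iff]
    rcases lt_trichotomy (j : ℕ) t with hj | hj | hj
    · simp [hj, hj.ne]
    · simp [hj]
    · simp [hj.ne', not_lt.mpr hj.le]
  · intro i _ hi
    rw [Derivation.smul_apply, digitMonomial, derivation_monomial (hD i)]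
    rcases lt_or_gt_of_ne (Fin.val_ne_of_ne hi) with hit | hit
    · simp [hdigit, hit]
    · rw [smul_eq_mul, prod_filter_lt_eq_monomial, mul_smul_comm, ← monomial_add,
        monomial_eq_zero hxp (j := ⟨t, ht⟩), smul_zero]
      have hti : (⟨t, ht⟩ : Fin m) < i := hit
      simp [Fin.ext_iff, hdigit, hdigit_t, hti, hit.ne]
      omega
  · simp

end Monomials

section Filtration

variable {k B : Type*} [Field k] [CommRing B] [Algebra k B] {m p : ℕ} [hp : Fact p.Prime]
  {x : Fin m → B}

omit hp in
lemma digitMonomial_zero : digitMonomial x p 0 = 1 := by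
  simp [digitMonomial, monomial, digit_zero_left]

lemma digitMonomial_pow (i : Fin m) : digitMonomial x p (p ^ (i : ℕ)) = x i := by
  rw [digitMonomial, monomial, prod_eq_single i (fun j _ hj => by
    simp [digit_pow hp.out.one_lt, Fin.val_ne_of_ne hj]) (by simp)]
  simp [digit_pow hp.out.one_lt]

lemma digitMonomial_pow_sub_one : digitMonomial x p (p ^ m - 1) = ∏ j, x j ^ (p - 1) := by
  unfold digitMonomial monomial
  exact prod_congr rfl fun j _ => by simp only [digit_pow_sub_one hp.out.pos j.isLt]

lemma digitMonomial_mem_span {N : ℕ} (hN0 : N ≠ 0) (hN : N < p ^ m) :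
    digitMonomial x p N ∈ Ideal.span (Set.range x) := by
  obtain ⟨t, q, hq, rfl⟩ := Nat.exists_eq_pow_mul_and_not_dvd hN0 p hp.out.ne_one
  have ht : t < m := lt_of_pow_mul_lt hp.out.one_lt (by rintro rfl; simp at hq) hN
  have hdigit : digit p (p ^ t * q) t ≠ 0 := by
    simpa [lowDigit, padicValNat_pow_mul hq] using lowDigit_ne_zero (p := p) hN0
  refine Ideal.mem_of_dvd _ ?_ (Ideal.subset_span ⟨⟨t, ht⟩, rfl⟩)
  exact (dvd_pow_self _ hdigit).trans (dvd_prod_of_mem (fun j : Fin m => x j ^ _) (mem_univ _))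

lemma tailSpan_one_le_span :
    tailSpan k (digitMonomial x p) (p ^ m) 1 ≤ (Ideal.span (Set.range x)).restrictScalars k := by
  refine Submodule.span_le.mpr ?_
  rintro _ ⟨N, ⟨hN0, hN⟩, rfl⟩
  exact digitMonomial_mem_span (by omega) hN

variable {D : Fin m → Derivation k B B} (hxp : ∀ j, x j ^ p = 0)
  (hadj : Algebra.adjoin k (Set.range x) = ⊤) (hD : ∀ i j, D i (x j) = if i = j then 1 else 0)
include hxp

lemma prod_pow_sub_one_mul_eq_zero (j : Fin m) : (∏ i, x i ^ (p - 1)) * x j = 0 := by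
  rw [← mul_prod_erase univ _ (mem_univ j), mul_right_comm, ← pow_succ,
    Nat.sub_add_cancel hp.out.one_le, hxp, zero_mul]

include hadj hD

lemma delta_add_smul_apply_sub_mem (R : Derivation k B B) {N : ℕ} (hN0 : 0 < N) (hN : N < p ^ m) :
    (delta x p D + (∏ j, x j ^ (p - 1)) • R) (digitMonomial x p N) -
        (lowDigit p N : k) • digitMonomial x p (N - 1) ∈
      tailSpan k (digitMonomial x p) (p ^ m) (p ^ m - 1) := by
  rw [Derivation.add_apply, delta_digitMonomial hxp hD hN0.ne' hN, Nat.cast_smul_eq_nsmul,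
    add_sub_cancel_left, Derivation.smul_apply, smul_eq_mul]
  have htop : k ∙ (∏ j, x j ^ (p - 1)) ≤ tailSpan k (digitMonomial x p) (p ^ m) (p ^ m - 1) := by
    rw [Submodule.span_singleton_le_iff_mem, ← digitMonomial_pow_sub_one]
    exact apply_mem_tailSpan le_rfl (Nat.sub_lt (pow_pos hp.out.pos m) one_pos)
  exact htop (mul_mem_span_singleton_of_adjoin_eq_top hadj
    (by rintro _ ⟨j, rfl⟩; exact prod_pow_sub_one_mul_eq_zero hxp j) _)

variable [CharP k p]

theorem delta_add_smul_pow_apply_sub_mem_span (R : Derivation k B B) (i j : Fin m) :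
    (((delta x p D + (∏ j, x j ^ (p - 1)) • R : Derivation k B B) : B →ₗ[k] B) ^ p ^ (i : ℕ))
        (x j) - (-1 : k) ^ (i : ℕ) • (if i = j then 1 else 0) ∈ Ideal.span (Set.range x) := by
  set T : B →ₗ[k] B := ↑(delta x p D + (∏ j, x j ^ (p - 1)) • R)
  have hT0 : T (digitMonomial x p 0) = 0 := by simp [T, digitMonomial_zero]
  have hT : ∀ N, 0 < N → N < p ^ m → T (digitMonomial x p N) - (lowDigit p N : k) •
      digitMonomial x p (N - 1) ∈ tailSpan k (digitMonomial x p) (p ^ m) (p ^ m - 1) :=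
    fun N hN0 hN => delta_add_smul_apply_sub_mem hxp hadj hD R hN0 hN
  have hlt (i : Fin m) : p ^ (i : ℕ) < p ^ m := Nat.pow_lt_pow_right hp.out.one_lt i.isLt
  refine tailSpan_one_le_span (k := k) (p := p) ?_
  rw [← digitMonomial_pow (x := x) (p := p) j]
  split_ifs with hij
  · subst hij
    have h := pow_apply_self_sub_mem hT0 hT (hlt i)
    rwa [prod_range_lowDigit_pow, digitMonomial_zero] at h
  · rw [smul_zero, sub_zero]
    exact pow_apply_mem_tailSpan_one hT0 hT
      (fun h => hij (Fin.ext (Nat.pow_right_injective hp.out.two_le h))) (hlt i) (hlt j)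

end Filtration

end JacobsonWitt

open JacobsonWitt in
theorem Delta_eps_powers_basis_general
    (k : Type*) [Field k] (p m : ℕ) [Fact (Nat.Prime p)] [CharP k p]
    (B : Type*) [CommRing B] [Algebra k B]
    (e : (MvPolynomial (Fin m) k ⧸
        Ideal.span (Set.range fun i : Fin m =>
          (MvPolynomial.X i : MvPolynomial (Fin m) k) ^ p)) ≃ₐ[k] B)
    (x : Fin m → B) (hx : ∀ j, x j = e (Ideal.Quotient.mk _ (MvPolynomial.X j)))
    (D : Fin m → Derivation k B B) (hD : ∀ i j, D i (x j) = if i = j then 1 else 0)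
    (b : Module.Basis (Fin m) B (Derivation k B B)) (hb : ∀ i, b i = D i)
    (ε : Fin m → k)
    (Δε : Derivation k B B)
    (hΔε : Δε = (∑ i : Fin m,
        (∏ j ∈ Finset.univ.filter (fun j : Fin m => j < i), x j ^ (p - 1)) • D i)
      + ∑ i : Fin m, ((-1 : k) ^ (m - (i : ℕ)) * ε i) • ((∏ j : Fin m, x j ^ (p - 1)) • D i))
    (E : Fin m → Derivation k B B)
    (hE : ∀ i, ((E i : B →ₗ[k] B)) = (Δε : B →ₗ[k] B) ^ (p ^ (i : ℕ))) :
    (∀ i j : Fin m,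
        b.repr (E i - ((-1 : k) ^ (i : ℕ)) • D i) j ∈ Ideal.span (Set.range x)) ∧
      ∃ c : Module.Basis (Fin m) B (Derivation k B B), ∀ i, c i = E i := by
  have hxp (j : Fin m) : x j ^ p = 0 := by
    rw [hx, ← map_pow, ← map_pow, Ideal.Quotient.eq_zero_iff_mem.mpr, map_zero]
    exact Ideal.subset_span ⟨j, rfl⟩
  have hadj : Algebra.adjoin k (Set.range x) = ⊤ :=
    funext hx ▸ MvPolynomial.adjoin_range_algEquiv_quotient_X _ e
  have hΔ : Δε = delta x p D + (∏ j, x j ^ (p - 1)) •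
      ∑ i : Fin m, ((-1 : k) ^ (m - (i : ℕ)) * ε i) • D i := by
    rw [hΔε, delta, Finset.smul_sum]
    exact congrArg _ (sum_congr rfl fun i _ => smul_comm _ _ _)
  have hcoord (i j : Fin m) :
      b.repr (E i - ((-1 : k) ^ (i : ℕ)) • D i) j ∈ Ideal.span (Set.range x) := by
    rw [b.repr_derivation_apply (by simpa [hb] using hD), Derivation.sub_apply,
      Derivation.smul_apply, hD, ← Derivation.coeFn_coe, hE, hΔ]
    exact delta_add_smul_pow_apply_sub_mem_span hxp hadj hD _ i j
  have hnil : IsNilpotent (Ideal.span (Set.range x)) :=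
    (Ideal.FG.isNilpotent_iff_le_nilradical (Submodule.fg_span (Set.finite_range x))).mpr
      (Ideal.span_le.mpr fun _ ⟨j, hj⟩ => hj ▸ ⟨p, hxp j⟩)
  exact ⟨hcoord, b.exists_basis_of_repr_sub_smul_mem hnil E
    (d := fun i => algebraMap k B ((-1) ^ (i : ℕ))) (fun i => (isUnit_one.neg.pow _).map _)
    fun i j => by rw [hb, algebraMap_smul]; exact hcoord i j⟩

/-- For `Δ_ε = Δ + x_1^{p-1}⋯x_{n-1}^{p-1} Σ_{i=1}^{n-1} (−1)^{n−i} ε_i D_i ∈ W_{n-1}`, the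
powers `Δ_ε^{p^i}` for `i = 0,...,n−2` satisfy `Δ_ε^{p^i} ≡ (−1)^i D_{i+1}` modulo
`m·W_{n-1}`, and thus form a basis of `W_{n-1}` as a free `B_{n-1}`-module.
Here `m` plays the role of `n − 1`. -/
theorem Delta_eps_powers_basis
    (k : Type*) [Field k] [IsAlgClosed k] (p m : ℕ) [Fact (Nat.Prime p)] [CharP k p]
    (hp : 3 < p) (hm : 2 ≤ m)
    (B : Type*) [CommRing B] [Algebra k B]
    (e : (MvPolynomial (Fin m) k ⧸
        Ideal.span (Set.range fun i : Fin m =>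
          (MvPolynomial.X i : MvPolynomial (Fin m) k) ^ p)) ≃ₐ[k] B)
    (x : Fin m → B) (hx : ∀ j, x j = e (Ideal.Quotient.mk _ (MvPolynomial.X j)))
    (D : Fin m → Derivation k B B) (hD : ∀ i j, D i (x j) = if i = j then 1 else 0)
    (b : Module.Basis (Fin m) B (Derivation k B B)) (hb : ∀ i, b i = D i)
    (ε : Fin m → k)
    (Δε : Derivation k B B)
    (hΔε : Δε = (∑ i : Fin m,
        (∏ j ∈ Finset.univ.filter (fun j : Fin m => j < i), x j ^ (p - 1)) • D i)
      + ∑ i : Fin m, ((-1 : k) ^ (m - (i : ℕ)) * ε i) • ((∏ j : Fin m, x j ^ (p - 1)) • D i))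
    (E : Fin m → Derivation k B B)
    (hE : ∀ i, ((E i : B →ₗ[k] B)) = (Δε : B →ₗ[k] B) ^ (p ^ (i : ℕ))) :
    (∀ i j : Fin m,
        b.repr (E i - ((-1 : k) ^ (i : ℕ)) • D i) j ∈ Ideal.span (Set.range x)) ∧
      ∃ c : Module.Basis (Fin m) B (Derivation k B B), ∀ i, c i = E i :=
  Delta_eps_powers_basis_general k p m B e x hx D hD b hb ε Δε hΔε E hE
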